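/- arXiv:1011.3216 — 3 statements merged into one kernel-verified Lean document; each statement's English description precedes it below -/
import Mathlib

section
/- Let G : ℝⁿ → ℝ be continuous with a unique global minimum point μ and suppose ∫_{ℝⁿ} exp(−G(x)) dx < ∞ and G is coercive (G(x) → ∞ as |x| → ∞). Then for every closed set V ⊆ ℝⁿ with μ ∉ V, there exists ε > 0 such that e^{N·G(μ)} ∫_V e^{−N·G(x)} dx = O(e^{−Nε}) as N → ∞. -/
/-!
A continuous coercive function attains its minimum on a closed set, so if `G μ < G` on the closed
set `V` there is a uniform gap `G μ + δ ≤ G` on `V`. For `N ≥ 1` this gives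
`e^{N G μ} e^{-N G} ≤ e^{G μ + δ} e^{-N δ} e^{-G}` on `V`, and integrating against the integrable
`e^{-G}` yields the bound.
-/

open MeasureTheory Filter Asymptotics Real

theorem exists_pos_add_le_of_lt_of_tendsto_cocompact {X : Type*} [TopologicalSpace X]
    {G : X → ℝ} (hcont : Continuous G) (hcoer : Tendsto G (cocompact X) atTop)
    {V : Set X} (hV : IsClosed V) {c : ℝ} (hlt : ∀ x ∈ V, c < G x) :
    ∃ δ > 0, ∀ x ∈ V, c + δ ≤ G x := by
  rcases V.eq_empty_or_nonempty with rfl | ⟨x₀, hx₀⟩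
  · exact ⟨1, one_pos, by simp⟩
  have hcoerV : ∀ᶠ x in cocompact X ⊓ 𝓟 V, G x₀ ≤ G x :=
    (hcoer.eventually (eventually_ge_atTop (G x₀))).filter_mono inf_le_left
  obtain ⟨m, hmV, hmin⟩ := hcont.continuousOn.exists_isMinOn' hV hx₀ hcoerV
  exact ⟨G m - c, sub_pos.mpr (hlt m hmV), fun x hx => by linarith [isMinOn_iff.mp hmin x hx]⟩

theorem isBigO_exp_mul_setIntegral_exp_neg_mul {α : Type*} [MeasurableSpace α] {ν : Measure α}
    {G : α → ℝ} {V : Set α} (hV : MeasurableSet V)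
    (hint : IntegrableOn (fun x => exp (-G x)) V ν) {m δ : ℝ} (hgap : ∀ x ∈ V, m + δ ≤ G x) :
    (fun N : ℕ => exp (N * m) * ∫ x in V, exp (-N * G x) ∂ν) =O[atTop]
      fun N : ℕ => exp (-N * δ) := by
  refine isBigO_iff.mpr ⟨exp (m + δ) * ∫ x in V, exp (-G x) ∂ν, ?_⟩
  filter_upwards [eventually_ge_atTop 1] with N hN
  have hN : (1 : ℝ) ≤ N := by exact_mod_cast hN
  have hpointwise : ∀ x ∈ V,
      exp (N * m) * exp (-N * G x) ≤ exp (m + δ) * exp (-N * δ) * exp (-G x) := by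
    intro x hx
    simp only [← exp_add]
    exact exp_le_exp.mpr (by nlinarith [mul_le_mul_of_nonneg_left (hgap x hx) (sub_nonneg.mpr hN)])
  have hnonneg : 0 ≤ ∫ x in V, exp (-N * G x) ∂ν := integral_nonneg fun _ => (exp_pos _).le
  rw [norm_of_nonneg (by positivity), norm_of_nonneg (exp_pos _).le]
  calc exp (N * m) * ∫ x in V, exp (-N * G x) ∂ν
      = ∫ x in V, exp (N * m) * exp (-N * G x) ∂ν := (integral_const_mul _ _).symm
    _ ≤ ∫ x in V, exp (m + δ) * exp (-N * δ) * exp (-G x) ∂ν :=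
        integral_mono_of_nonneg (.of_forall fun _ => by positivity) (hint.const_mul _)
          ((ae_restrict_mem hV).mono hpointwise)
    _ = exp (m + δ) * (∫ x in V, exp (-G x) ∂ν) * exp (-N * δ) := by
        rw [integral_const_mul]; ring

theorem stmt8 (n : ℕ) (G : (Fin n → ℝ) → ℝ) (μ : Fin n → ℝ)
    (hcont : Continuous G) (hmin : ∀ x, x ≠ μ → G μ < G x)
    (hint : Integrable fun x : Fin n → ℝ => Real.exp (-G x))
    (hcoer : Tendsto G (cocompact (Fin n → ℝ)) atTop)
    (V : Set (Fin n → ℝ)) (hV : IsClosed V) (hμV : μ ∉ V) :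
    ∃ ε > 0, (fun N : ℕ => Real.exp ((N : ℝ) * G μ) * ∫ x in V, Real.exp (-(N : ℝ) * G x))
      =O[atTop] fun N : ℕ => Real.exp (-(N : ℝ) * ε) := by
  obtain ⟨δ, hδ, hgap⟩ := exists_pos_add_le_of_lt_of_tendsto_cocompact hcont hcoer hV
    fun x hx => hmin x (ne_of_mem_of_not_mem hx hμV)
  exact ⟨δ, hδ, isBigO_exp_mul_setIntegral_exp_neg_mul hV.measurableSet hint.integrableOn hgap⟩
end

section
/- Let n = 2, α₁ = α₂ = 1/2, h₁ = h₂ = 0, J₁₁ = J₂₂, and G as in the two-population model. Then (0,0) is a critical point of G, and the Hessian of G at (0,0) is positive definite if and only if either (0 < J₁₁ ≤ 1 and −J₁₁ < J₁₂ < J₁₁) or (1 < J₁₁ < 2 and J₁₁ − 2 < J₁₂ < 2 − J₁₁). -/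
/-!
`G` is symmetric under `x ↔ y`, so everything is read off its partial derivative in `x`. That
derivative vanishes at the origin since `tanh 0 = 0`, and `tanh' 0 = 1` makes the Hessian the
circulant matrix `[[A, B], [B, A]]` with `A ± B = s (2 − s) / 8` for `s = J₁₁ ± J₁₂`. Its
eigenvalues are `A ± B`, so it is positive definite iff `0 < J₁₁ ± J₁₂ < 2`.
-/

open Real

theorem HasDerivAt.tanh {f : ℝ → ℝ} {f' x : ℝ} (hf : HasDerivAt f f' x) :
    HasDerivAt (fun t => Real.tanh (f t)) ((1 - Real.tanh (f x) ^ 2) * f') x := by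
  have hc := (Real.cosh_pos (f x)).ne'
  simp only [Real.tanh_eq_sinh_div_cosh]
  refine (hf.sinh.fun_div hf.cosh hc).congr_deriv ?_
  field_simp

theorem HasDerivAt.log_cosh {f : ℝ → ℝ} {f' x : ℝ} (hf : HasDerivAt f f' x) :
    HasDerivAt (fun t => Real.log (Real.cosh (f t))) (Real.tanh (f x) * f') x := by
  convert hf.cosh.log (Real.cosh_pos _).ne' using 1
  rw [Real.tanh_eq_sinh_div_cosh]
  ring

noncomputable def freeEnergy (J11 J12 x y : ℝ) : ℝ :=
  (1/8) * (J11 * x^2 + 2 * J12 * x * y + J11 * y^2)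
    - (1/2) * Real.log (Real.cosh (J11/2 * x + J12/2 * y))
    - (1/2) * Real.log (Real.cosh (J12/2 * x + J11/2 * y))

noncomputable def freeEnergyDeriv₁ (J11 J12 x y : ℝ) : ℝ :=
  (J11 * x + J12 * y) / 4 - J11/4 * Real.tanh (J11/2 * x + J12/2 * y)
    - J12/4 * Real.tanh (J12/2 * x + J11/2 * y)

section
variable (J11 J12 : ℝ)

theorem freeEnergy_comm (x y : ℝ) : freeEnergy J11 J12 x y = freeEnergy J11 J12 y x := by
  unfold freeEnergy; ring_nf

theorem hasDerivAt_freeEnergy_left (x y : ℝ) :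
    HasDerivAt (fun t => freeEnergy J11 J12 t y) (freeEnergyDeriv₁ J11 J12 x y) x := by
  have hquad : HasDerivAt (fun t => (1/8) * (J11 * t^2 + 2 * J12 * t * y + J11 * y^2))
      ((1/8) * (J11 * (2 * x) + 2 * J12 * y)) x := by
    have := (((hasDerivAt_pow 2 x).const_mul J11).fun_add
      ((hasDerivAt_id' x).const_mul (2 * J12) |>.mul_const y)).add_const (J11 * y^2)
    exact (this.const_mul (1/8)).congr_deriv (by push_cast; ring)
  have h1 := ((hasDerivAt_id' x).const_mul (J11/2) |>.add_const (J12/2 * y)).log_cosh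
  have h2 := ((hasDerivAt_id' x).const_mul (J12/2) |>.add_const (J11/2 * y)).log_cosh
  refine ((hquad.sub (h1.const_mul (1/2))).sub (h2.const_mul (1/2))).congr_deriv ?_
  unfold freeEnergyDeriv₁; ring

theorem deriv_freeEnergy_left (y : ℝ) :
    deriv (fun t => freeEnergy J11 J12 t y) = fun x => freeEnergyDeriv₁ J11 J12 x y :=
  funext fun x => (hasDerivAt_freeEnergy_left J11 J12 x y).deriv

theorem freeEnergyDeriv₁_zero : freeEnergyDeriv₁ J11 J12 0 0 = 0 := by
  simp [freeEnergyDeriv₁]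

theorem hasDerivAt_freeEnergyDeriv₁_left_zero :
    HasDerivAt (fun t => freeEnergyDeriv₁ J11 J12 t 0) ((2 * J11 - J11^2 - J12^2) / 8) 0 := by
  have hlin := ((hasDerivAt_id' (0 : ℝ)).const_mul J11).div_const 4
  have h1 := ((hasDerivAt_id' (0 : ℝ)).const_mul (J11/2)).tanh.const_mul (J11/4)
  have h2 := ((hasDerivAt_id' (0 : ℝ)).const_mul (J12/2)).tanh.const_mul (J12/4)
  simp only [freeEnergyDeriv₁, mul_zero, add_zero]
  refine ((hlin.fun_sub h1).fun_sub h2).congr_deriv ?_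
  simp only [mul_zero, tanh_zero]; ring

theorem hasDerivAt_freeEnergyDeriv₁_right_zero :
    HasDerivAt (fun t => freeEnergyDeriv₁ J11 J12 0 t) (J12 * (2 - 2 * J11) / 8) 0 := by
  have hlin := ((hasDerivAt_id' (0 : ℝ)).const_mul J12).div_const 4
  have h1 := ((hasDerivAt_id' (0 : ℝ)).const_mul (J12/2)).tanh.const_mul (J11/4)
  have h2 := ((hasDerivAt_id' (0 : ℝ)).const_mul (J11/2)).tanh.const_mul (J12/4)
  simp only [freeEnergyDeriv₁, mul_zero, zero_add]
  refine ((hlin.fun_sub h1).fun_sub h2).congr_deriv ?_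
  simp only [mul_zero, tanh_zero]; ring

end

open Matrix in
theorem posDef_circulant_fin_two_iff (a b : ℝ) :
    (!![a, b; b, a]).PosDef ↔ 0 < a + b ∧ 0 < a - b := by
  have hform : ∀ x : Fin 2 → ℝ, star x ⬝ᵥ (!![a, b; b, a] *ᵥ x)
      = ((a + b) * (x 0 + x 1) ^ 2 + (a - b) * (x 0 - x 1) ^ 2) / 2 := by
    intro x
    simp [Matrix.mulVec, dotProduct, Fin.sum_univ_two]
    ring
  have hherm : (!![a, b; b, a]).IsHermitian := by
    ext i j; fin_cases i <;> fin_cases j <;> rfl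
  simp only [posDef_iff_dotProduct_mulVec, hform, hherm, true_and]
  constructor
  · intro h
    have h1 := h (x := ![1, 1]) (by simp)
    have h2 := h (x := ![1, -1]) (by simp)
    norm_num at h1 h2
    exact ⟨h1, sub_pos.mpr h2⟩
  · rintro ⟨hp, hm⟩ x hx
    have hne : x 0 + x 1 ≠ 0 ∨ x 0 - x 1 ≠ 0 := by
      by_contra! hc
      exact hx (funext fun i => by fin_cases i <;> simp <;> linarith [hc.1, hc.2])
    rcases hne with hne | hne <;> positivity

theorem mul_two_sub_pos_iff (s : ℝ) : 0 < s * (2 - s) ↔ s ∈ Set.Ioo 0 2 := by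
  constructor
  · intro h
    constructor <;> nlinarith
  · rintro ⟨h0, h2⟩
    exact mul_pos h0 (by linarith)

theorem add_sub_mem_Ioo_iff (a b : ℝ) :
    a + b ∈ Set.Ioo 0 2 ∧ a - b ∈ Set.Ioo 0 2 ↔
      (0 < a ∧ a ≤ 1 ∧ -a < b ∧ b < a) ∨ (1 < a ∧ a < 2 ∧ a - 2 < b ∧ b < 2 - a) := by
  constructor
  · rintro ⟨⟨hs₀, hs₂⟩, hd₀, hd₂⟩
    rcases le_or_gt a 1 with h | h
    · exact Or.inl ⟨by linarith, h, by linarith, by linarith⟩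
    · exact Or.inr ⟨h, by linarith, by linarith, by linarith⟩
  · rintro (⟨h₁, h₂, h₃, h₄⟩ | ⟨h₁, h₂, h₃, h₄⟩) <;> refine ⟨⟨?_, ?_⟩, ?_, ?_⟩ <;> linarith

theorem stmt11 (J11 J12 : ℝ)
    (G : ℝ → ℝ → ℝ)
    (hG : ∀ x1 x2, G x1 x2 = (1/8) * (J11 * x1^2 + 2 * J12 * x1 * x2 + J11 * x2^2)
      - (1/2) * Real.log (Real.cosh (J11/2 * x1 + J12/2 * x2))
      - (1/2) * Real.log (Real.cosh (J12/2 * x1 + J11/2 * x2))) :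
    (deriv (fun x => G x 0) 0 = 0 ∧ deriv (fun y => G 0 y) 0 = 0) ∧
    ((Matrix.of
        !![iteratedDeriv 2 (fun x => G x 0) 0, deriv (fun y => deriv (fun x => G x y) 0) 0;
           deriv (fun y => deriv (fun x => G x y) 0) 0, iteratedDeriv 2 (fun y => G 0 y) 0]).PosDef
      ↔ ((0 < J11 ∧ J11 ≤ 1 ∧ -J11 < J12 ∧ J12 < J11) ∨
         (1 < J11 ∧ J11 < 2 ∧ J11 - 2 < J12 ∧ J12 < 2 - J11))) := by
  obtain rfl : G = freeEnergy J11 J12 := funext₂ hG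
  have hsymm : (fun y => freeEnergy J11 J12 0 y) = fun y => freeEnergy J11 J12 y 0 :=
    funext fun y => freeEnergy_comm J11 J12 0 y
  have hcrit : deriv (fun x => freeEnergy J11 J12 x 0) 0 = 0 := by
    rw [deriv_freeEnergy_left]
    exact freeEnergyDeriv₁_zero J11 J12
  have hxx : iteratedDeriv 2 (fun x => freeEnergy J11 J12 x 0) 0
      = (2 * J11 - J11^2 - J12^2) / 8 := by
    rw [iteratedDeriv_succ, iteratedDeriv_one, deriv_freeEnergy_left]
    exact (hasDerivAt_freeEnergyDeriv₁_left_zero J11 J12).deriv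
  have hxy : deriv (fun y => deriv (fun x => freeEnergy J11 J12 x y) 0) 0
      = J12 * (2 - 2 * J11) / 8 := by
    simp only [deriv_freeEnergy_left]
    exact (hasDerivAt_freeEnergyDeriv₁_right_zero J11 J12).deriv
  refine ⟨⟨hcrit, hsymm ▸ hcrit⟩, ?_⟩
  rw [hsymm, hxx, hxy]
  refine (posDef_circulant_fin_two_iff _ _).trans ?_
  rw [show (2 * J11 - J11^2 - J12^2) / 8 + J12 * (2 - 2 * J11) / 8
      = (J11 + J12) * (2 - (J11 + J12)) / 8 by ring,
    show (2 * J11 - J11^2 - J12^2) / 8 - J12 * (2 - 2 * J11) / 8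
      = (J11 - J12) * (2 - (J11 - J12)) / 8 by ring,
    div_pos_iff_of_pos_right (by norm_num), div_pos_iff_of_pos_right (by norm_num),
    mul_two_sub_pos_iff, mul_two_sub_pos_iff, add_sub_mem_Ioo_iff]
end

section
/- Let G : ℝⁿ → ℝ be smooth with a unique global minimum at μ = 0, G(0) = 0, such that the Taylor expansion of G at 0 has vanishing terms of all orders < 2k and 2k-th order term G_{2k}(x) which is a positive function for x ≠ 0 (homogeneous of degree 2k), and ∫ exp(−G) < ∞, G coercive. Then for every bounded continuous ψ, ∫ exp(−N G(x/N^{1/2k})) ψ(x) dx / ∫ exp(−N G(x/N^{1/2k})) dx → ∫ exp(−G_{2k}(x)) ψ(x) dx / ∫ exp(−G_{2k}(x)) dx as N → ∞. -/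
open Real MeasureTheory Filter Asymptotics

section aux
variable {n k : ℕ}

lemma aux_lo {G G2k : (Fin n → ℝ) → ℝ}
    (h : (fun x : Fin n → ℝ => G x - G2k x) =o[nhds 0] fun x : Fin n → ℝ => ‖x‖ ^ (2 * k)) :
    ∀ ε > (0:ℝ), ∃ δ > (0:ℝ), ∀ y : Fin n → ℝ, ‖y‖ ≤ δ → |G y - G2k y| ≤ ε * ‖y‖ ^ (2 * k) := by
  intro ε hε
  have h2 := h.def hε
  rw [Metric.eventually_nhds_iff] at h2
  obtain ⟨δ, hδ, hb⟩ := h2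
  refine ⟨δ / 2, by linarith, fun y hy => ?_⟩
  have := hb (y := y) (by rw [dist_zero_right]; linarith)
  simpa [Real.norm_eq_abs, abs_of_nonneg (pow_nonneg (norm_nonneg y) _)] using this

lemma aux_G2k0 (hk : 1 ≤ k) {G2k : (Fin n → ℝ) → ℝ}
    (hhom : ∀ t : ℝ, 0 < t → ∀ x, G2k (t • x) = t ^ (2 * k) * G2k x) : G2k 0 = 0 := by
  have h := hhom 2 (by norm_num) 0
  rw [smul_zero] at h
  have h2 : (1:ℝ) < 2 ^ (2 * k) := one_lt_pow₀ (by norm_num) (by omega)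
  nlinarith [h2]

lemma aux_key (hk : 1 ≤ k) {G G2k : (Fin n → ℝ) → ℝ}
    (hhom : ∀ t : ℝ, 0 < t → ∀ x, G2k (t • x) = t ^ (2 * k) * G2k x)
    (htaylor : (fun x : Fin n → ℝ => G x - G2k x) =o[nhds 0] fun x : Fin n → ℝ => ‖x‖ ^ (2 * k)) :
    ∀ ε > (0:ℝ), ∃ δ > (0:ℝ), ∀ (N t : ℝ) (x : Fin n → ℝ), 0 < t → N * t ^ (2 * k) = 1 →
      ‖x‖ * t ≤ δ → |N * G (t • x) - G2k x| ≤ ε * ‖x‖ ^ (2 * k) := by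
  intro ε hε
  obtain ⟨δ, hδ, hb⟩ := aux_lo htaylor ε hε
  refine ⟨δ, hδ, fun N t x ht hNt hxt => ?_⟩
  have htx : ‖t • x‖ = ‖x‖ * t := by
    rw [norm_smul, Real.norm_eq_abs, abs_of_pos ht, mul_comm]
  have h1 : |G (t • x) - G2k (t • x)| ≤ ε * (‖x‖ * t) ^ (2 * k) := by
    have := hb (t • x) (by rw [htx]; exact hxt)
    rwa [htx] at this
  have hN : 0 < N := by
    have h2k : (0:ℝ) < t ^ (2 * k) := pow_pos ht _
    nlinarith
  have heq : N * G (t • x) - G2k x = N * (G (t • x) - G2k (t • x)) := by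
    rw [hhom t ht x]
    linear_combination (G2k x) * hNt
  rw [heq, abs_mul, abs_of_pos hN]
  calc N * |G (t • x) - G2k (t • x)| ≤ N * (ε * (‖x‖ * t) ^ (2 * k)) := by
        exact mul_le_mul_of_nonneg_left h1 hN.le
    _ = ε * ‖x‖ ^ (2 * k) := by
        rw [mul_pow]
        linear_combination (ε * ‖x‖ ^ (2 * k)) * hNt

lemma aux_cont (hk : 1 ≤ k) {G G2k : (Fin n → ℝ) → ℝ}
    (hsmooth : ContDiff ℝ (⊤ : ℕ∞) G)
    (hhom : ∀ t : ℝ, 0 < t → ∀ x, G2k (t • x) = t ^ (2 * k) * G2k x)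
    (htaylor : (fun x : Fin n → ℝ => G x - G2k x) =o[nhds 0] fun x : Fin n → ℝ => ‖x‖ ^ (2 * k))
    (aux_key : ∀ ε > (0:ℝ), ∃ δ > (0:ℝ), ∀ (N t : ℝ) (x : Fin n → ℝ), 0 < t →
      N * t ^ (2 * k) = 1 → ‖x‖ * t ≤ δ → |N * G (t • x) - G2k x| ≤ ε * ‖x‖ ^ (2 * k)) :
    Continuous G2k := by
  set F : ℕ → (Fin n → ℝ) → ℝ :=
    fun m x => ((m:ℝ) + 1) ^ (2 * k) * G ((((m:ℝ) + 1)⁻¹) • x) with hF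
  have hFc : ∀ m, Continuous (F m) :=
    fun m => continuous_const.mul (hsmooth.continuous.comp (continuous_const_smul _))
  have hul : TendstoLocallyUniformly F G2k atTop := by
    rw [Metric.tendstoLocallyUniformly_iff]
    intro ε hε x
    refine ⟨Metric.ball x 1, Metric.ball_mem_nhds x one_pos, ?_⟩
    set R : ℝ := ‖x‖ + 1 with hR
    have hR0 : 0 < R := by positivity
    set ε₁ : ℝ := ε / (2 * (R ^ (2 * k) + 1)) with hε₁
    have hε₁0 : 0 < ε₁ := by positivity
    obtain ⟨δ, hδ, hkey⟩ := aux_key ε₁ hε₁0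
    filter_upwards [eventually_ge_atTop ⌈R / δ⌉₊] with m hm y hy
    have hm1 : R / δ ≤ (m:ℝ) + 1 := by
      have h0 : ((⌈R / δ⌉₊ : ℕ) : ℝ) ≤ (m : ℝ) := by exact_mod_cast hm
      have := Nat.le_ceil (R / δ)
      linarith
    have ht : (0:ℝ) < ((m:ℝ) + 1)⁻¹ := by positivity
    have hNt : ((m:ℝ) + 1) ^ (2 * k) * (((m:ℝ) + 1)⁻¹) ^ (2 * k) = 1 := by
      rw [← mul_pow, mul_inv_cancel₀ (by positivity)]; simp
    have hyR : ‖y‖ ≤ R := by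
      have := norm_sub_norm_le y x
      have hd : dist y x < 1 := Metric.mem_ball.mp hy
      rw [dist_eq_norm] at hd
      simp only [hR]; linarith
    have hyt : ‖y‖ * ((m:ℝ) + 1)⁻¹ ≤ δ := by
      have h1 : ‖y‖ * ((m:ℝ) + 1)⁻¹ ≤ R * ((m:ℝ) + 1)⁻¹ :=
        mul_le_mul_of_nonneg_right hyR ht.le
      have h2 : R * ((m:ℝ) + 1)⁻¹ ≤ δ := by
        rw [div_le_iff₀ hδ] at hm1
        rw [mul_inv_le_iff₀ (by positivity)]
        linarith
      linarith
    have := hkey (((m:ℝ) + 1) ^ (2 * k)) (((m:ℝ) + 1)⁻¹) y ht hNt hyt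
    have hpow : ‖y‖ ^ (2 * k) ≤ R ^ (2 * k) := pow_le_pow_left₀ (norm_nonneg y) hyR _
    have hlt : ε₁ * ‖y‖ ^ (2 * k) < ε := by
      have : ε₁ * ‖y‖ ^ (2 * k) ≤ ε₁ * R ^ (2 * k) :=
        mul_le_mul_of_nonneg_left hpow hε₁0.le
      have h3 : ε₁ * R ^ (2 * k) < ε := by
        rw [hε₁]
        rw [div_mul_eq_mul_div, div_lt_iff₀ (by positivity)]
        nlinarith [pow_nonneg hR0.le (2 * k)]
      linarith
    rw [dist_eq_norm, Real.norm_eq_abs, abs_sub_comm]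
    calc |F m y - G2k y| ≤ ε₁ * ‖y‖ ^ (2 * k) := this
      _ < ε := hlt
  exact hul.continuous (Eventually.of_forall hFc).frequently

lemma aux_lower (hk : 1 ≤ k) {G2k : (Fin n → ℝ) → ℝ} (hcont : Continuous G2k)
    (hhom : ∀ t : ℝ, 0 < t → ∀ x, G2k (t • x) = t ^ (2 * k) * G2k x)
    (hpos : ∀ x : Fin n → ℝ, x ≠ 0 → 0 < G2k x) :
    ∃ c > (0:ℝ), ∀ x : Fin n → ℝ, c * ‖x‖ ^ (2 * k) ≤ G2k x := by
  have hG0 : G2k 0 = 0 := by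
    have h := hhom 2 (by norm_num) 0
    rw [smul_zero] at h
    have h2 : (1:ℝ) < 2 ^ (2 * k) := one_lt_pow₀ (by norm_num) (by omega)
    nlinarith
  by_cases hne : (Metric.sphere (0 : Fin n → ℝ) 1).Nonempty
  · obtain ⟨z, hz, hzmin⟩ := (isCompact_sphere (0 : Fin n → ℝ) 1).exists_isMinOn hne
      hcont.continuousOn
    have hz1 : ‖z‖ = 1 := by simpa using hz
    have hz0 : z ≠ 0 := by intro h; rw [h, norm_zero] at hz1; norm_num at hz1
    refine ⟨G2k z, hpos z hz0, fun x => ?_⟩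
    rcases eq_or_ne x 0 with rfl | hx
    · simp [hG0, zero_pow (by omega : 2 * k ≠ 0)]
    · have hxn : (0:ℝ) < ‖x‖ := norm_pos_iff.mpr hx
      set u : Fin n → ℝ := ‖x‖⁻¹ • x with hu
      have hus : u ∈ Metric.sphere (0 : Fin n → ℝ) 1 := by
        simp [hu, norm_smul, abs_of_pos (inv_pos.mpr hxn), inv_mul_cancel₀ hxn.ne']
      have hxu : x = ‖x‖ • u := by
        rw [hu, smul_smul, mul_inv_cancel₀ hxn.ne', one_smul]
      have := hzmin hus
      calc G2k z * ‖x‖ ^ (2 * k) ≤ G2k u * ‖x‖ ^ (2 * k) := by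
            exact mul_le_mul_of_nonneg_right this (by positivity)
        _ = G2k x := by
            conv_rhs => rw [hxu, hhom ‖x‖ hxn u]
            ring
  · refine ⟨1, one_pos, fun x => ?_⟩
    rcases eq_or_ne x 0 with rfl | hx
    · simp [hG0, zero_pow (by omega : 2 * k ≠ 0)]
    · exfalso
      apply hne
      have hxn : (0:ℝ) < ‖x‖ := norm_pos_iff.mpr hx
      exact ⟨‖x‖⁻¹ • x, by
        simp [norm_smul, abs_of_pos (inv_pos.mpr hxn), inv_mul_cancel₀ hxn.ne']⟩

lemma aux_far {G : (Fin n → ℝ) → ℝ} (hGc : Continuous G)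
    (hmin : ∀ x : Fin n → ℝ, x ≠ 0 → 0 < G x)
    (hcoer : Tendsto G (cocompact (Fin n → ℝ)) atTop) :
    ∀ δ > (0:ℝ), ∃ m > (0:ℝ), ∀ y : Fin n → ℝ, δ ≤ ‖y‖ → m ≤ G y := by
  intro δ hδ
  have h1 : ∀ᶠ y in cocompact (Fin n → ℝ), (1:ℝ) ≤ G y := hcoer.eventually (eventually_ge_atTop 1)
  rw [Filter.eventually_iff, mem_cocompact] at h1
  obtain ⟨K, hK, hKs⟩ := h1
  obtain ⟨R, hR⟩ := hK.isBounded.subset_closedBall (0 : Fin n → ℝ)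
  set A : Set (Fin n → ℝ) := Metric.closedBall 0 R ∩ {y | δ ≤ ‖y‖} with hA
  have hAc : IsCompact A := (isCompact_closedBall _ _).inter_right
    (isClosed_le continuous_const continuous_norm)
  have hout : ∀ y : Fin n → ℝ, ¬ (‖y‖ ≤ R) → (1:ℝ) ≤ G y := by
    intro y hy
    apply hKs
    simp only [Set.mem_compl_iff]
    intro hmem
    exact hy (by simpa [dist_zero_right] using Metric.mem_closedBall.mp (hR hmem))
  by_cases hAne : A.Nonempty
  · obtain ⟨z, hz, hzmin⟩ := hAc.exists_isMinOn hAne hGc.continuousOn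
    have hz0 : z ≠ 0 := by
      intro h
      have := hz.2
      rw [h] at this
      simp only [Set.mem_setOf_eq, norm_zero] at this
      linarith
    refine ⟨min 1 (G z), lt_min one_pos (hmin z hz0), fun y hy => ?_⟩
    by_cases hyR : ‖y‖ ≤ R
    · have : y ∈ A := ⟨by simpa [dist_zero_right] using hyR, hy⟩
      exact le_trans (min_le_right _ _) (hzmin this)
    · exact le_trans (min_le_left _ _) (hout y hyR)
  · refine ⟨1, one_pos, fun y hy => ?_⟩
    by_cases hyR : ‖y‖ ≤ R
    · exfalso
      exact hAne ⟨y, ⟨by simpa [dist_zero_right] using hyR, hy⟩⟩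
    · exact hout y hyR

lemma aux_gauss (hk : 1 ≤ k) {β : ℝ} (hβ : 0 < β) :
    Integrable (fun x : Fin n → ℝ => Real.exp (-β * ‖x‖ ^ (2 * k))) := by
  have hint : Integrable (fun x : Fin n → ℝ =>
      Real.exp β * ∏ i, Real.exp (-(β / (n + 1)) * (x i) ^ 2)) := by
    apply Integrable.const_mul
    exact Integrable.fintype_prod (f := fun _ (t : ℝ) => Real.exp (-(β / (n + 1)) * t ^ 2))
      (fun i => integrable_exp_neg_mul_sq (by positivity))
  apply hint.mono
  · exact (Real.continuous_exp.comp ((continuous_const.mul (continuous_norm.pow (2 * k))))).aestronglyMeasurable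
  · refine Eventually.of_forall fun x => ?_
    have h1 : ∑ i, (x i) ^ 2 ≤ (n : ℝ) * ‖x‖ ^ 2 := by
      calc ∑ i, (x i) ^ 2 ≤ ∑ _i : Fin n, ‖x‖ ^ 2 := by
            apply Finset.sum_le_sum
            intro i _
            have hxi : |x i| ≤ ‖x‖ := by
              rw [← Real.norm_eq_abs]; exact norm_le_pi_norm x i
            nlinarith [pow_le_pow_left₀ (abs_nonneg (x i)) hxi 2, sq_abs (x i)]
        _ = (n : ℝ) * ‖x‖ ^ 2 := by simp [Finset.sum_const, mul_comm]
    have h2 : ‖x‖ ^ 2 ≤ 1 + ‖x‖ ^ (2 * k) := by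
      rcases le_or_gt ‖x‖ 1 with h | h
      · have : ‖x‖ ^ 2 ≤ 1 := pow_le_one₀ (norm_nonneg x) h
        have := pow_nonneg (norm_nonneg x) (2 * k)
        linarith
      · have : ‖x‖ ^ 2 ≤ ‖x‖ ^ (2 * k) := pow_le_pow_right₀ h.le (by omega)
        linarith
    have h3 : (β / (n + 1)) * ∑ i, (x i) ^ 2 ≤ β + β * ‖x‖ ^ (2 * k) := by
      have hn1 : (0:ℝ) < (n:ℝ) + 1 := by positivity
      have h4 : (β / (n + 1)) * ∑ i, (x i) ^ 2 ≤ (β / (n + 1)) * ((n : ℝ) * ‖x‖ ^ 2) :=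
        mul_le_mul_of_nonneg_left h1 (by positivity)
      have h5 : (β / (n + 1)) * ((n : ℝ) * ‖x‖ ^ 2) ≤ β * ‖x‖ ^ 2 := by
        rw [div_mul_eq_mul_div, div_le_iff₀ hn1]
        nlinarith [sq_nonneg ‖x‖, Nat.cast_nonneg (α := ℝ) n]
      nlinarith
    have hposs : (0:ℝ) < Real.exp β * ∏ i, Real.exp (-(β / (n + 1)) * (x i) ^ 2) := by
      positivity
    rw [Real.norm_eq_abs, Real.norm_eq_abs, abs_of_pos (Real.exp_pos _), abs_of_pos hposs,
      ← Real.exp_sum, ← Real.exp_add]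
    apply Real.exp_le_exp.mpr
    have : ∑ i, -(β / (n + 1)) * (x i) ^ 2 = -((β / (n + 1)) * ∑ i, (x i) ^ 2) := by
      rw [Finset.mul_sum]; simp [neg_mul]
    rw [this]
    linarith

lemma aux_tN (hk : 1 ≤ k) {N : ℕ} (hN : 1 ≤ N) :
    0 < (N:ℝ) ^ (-(1:ℝ) / (2 * (k:ℝ))) ∧
      (N:ℝ) * ((N:ℝ) ^ (-(1:ℝ) / (2 * (k:ℝ)))) ^ (2 * k) = 1 := by
  have hN0 : (0:ℝ) < (N:ℝ) := by exact_mod_cast hN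
  have h2k : (2 * (k:ℝ)) ≠ 0 := by
    have : (1:ℝ) ≤ (k:ℝ) := by exact_mod_cast hk
    positivity
  constructor
  · exact Real.rpow_pos_of_pos hN0 _
  · have h1 : ((N:ℝ) ^ (-(1:ℝ) / (2 * (k:ℝ)))) ^ (2 * k)
        = (N:ℝ) ^ ((-(1:ℝ) / (2 * (k:ℝ))) * ((2 * k : ℕ) : ℝ)) := by
      rw [← Real.rpow_natCast ((N:ℝ) ^ (-(1:ℝ) / (2 * (k:ℝ)))) (2 * k),
        ← Real.rpow_mul hN0.le]
    have h2 : (-(1:ℝ) / (2 * (k:ℝ))) * ((2 * k : ℕ) : ℝ) = -1 := by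
      push_cast
      field_simp
    rw [h1, h2, Real.rpow_neg_one, mul_inv_cancel₀ hN0.ne']

lemma aux_tN_lim (hk : 1 ≤ k) :
    Tendsto (fun N : ℕ => (N:ℝ) ^ (-(1:ℝ) / (2 * (k:ℝ)))) atTop (nhds 0) := by
  have hkk : (0:ℝ) < 1 / (2 * (k:ℝ)) := by
    have : (1:ℝ) ≤ (k:ℝ) := by exact_mod_cast hk
    positivity
  have h := (tendsto_rpow_neg_atTop hkk).comp (tendsto_natCast_atTop_atTop (R := ℝ))
  refine h.congr fun N => ?_
  simp [Function.comp, neg_div]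

lemma aux_tN_scale (hk : 1 ≤ k) {N : ℕ} (hN : 1 ≤ N) :
    |(((N:ℝ) ^ (-(1:ℝ) / (2 * (k:ℝ)))) ^ n)⁻¹| = (N:ℝ) ^ ((n:ℝ) / (2 * (k:ℝ))) := by
  have hN0 : (0:ℝ) < (N:ℝ) := by exact_mod_cast hN
  have h1 : (((N:ℝ) ^ (-(1:ℝ) / (2 * (k:ℝ)))) ^ n)
      = (N:ℝ) ^ ((-(1:ℝ) / (2 * (k:ℝ))) * (n : ℝ)) := by
    rw [← Real.rpow_natCast ((N:ℝ) ^ (-(1:ℝ) / (2 * (k:ℝ)))) n, ← Real.rpow_mul hN0.le]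
  rw [h1, ← Real.rpow_neg hN0.le, abs_of_pos (Real.rpow_pos_of_pos hN0 _)]
  congr 1
  ring

lemma aux_main (hk : 1 ≤ k) (G G2k : (Fin n → ℝ) → ℝ)
    (hGc : Continuous G)
    (hkey : ∀ ε > (0:ℝ), ∃ δ > (0:ℝ), ∀ (N t : ℝ) (x : Fin n → ℝ), 0 < t →
      N * t ^ (2 * k) = 1 → ‖x‖ * t ≤ δ → |N * G (t • x) - G2k x| ≤ ε * ‖x‖ ^ (2 * k))
    (hlow : ∃ c > (0:ℝ), ∀ x : Fin n → ℝ, c * ‖x‖ ^ (2 * k) ≤ G2k x)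
    (hfar : ∀ δ > (0:ℝ), ∃ m > (0:ℝ), ∀ y : Fin n → ℝ, δ ≤ ‖y‖ → m ≤ G y)
    (hgauss : ∀ β > (0:ℝ), Integrable (fun x : Fin n → ℝ => Real.exp (-β * ‖x‖ ^ (2 * k))))
    (htN : ∀ {N : ℕ}, 1 ≤ N → 0 < (N:ℝ) ^ (-(1:ℝ) / (2 * (k:ℝ))) ∧
      (N:ℝ) * ((N:ℝ) ^ (-(1:ℝ) / (2 * (k:ℝ)))) ^ (2 * k) = 1)
    (htNlim : Tendsto (fun N : ℕ => (N:ℝ) ^ (-(1:ℝ) / (2 * (k:ℝ)))) atTop (nhds 0))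
    (htNscale : ∀ {N : ℕ}, 1 ≤ N →
      |(((N:ℝ) ^ (-(1:ℝ) / (2 * (k:ℝ)))) ^ n)⁻¹| = (N:ℝ) ^ ((n:ℝ) / (2 * (k:ℝ))))
    (hint : Integrable fun x : Fin n → ℝ => Real.exp (-G x))
    (φ : BoundedContinuousFunction (Fin n → ℝ) ℝ) :
    Tendsto (fun N : ℕ =>
        ∫ x : Fin n → ℝ, Real.exp (-(N : ℝ) * G (((N : ℝ) ^ (-(1 : ℝ) / (2 * k))) • x)) * φ x)
      atTop (nhds (∫ x : Fin n → ℝ, Real.exp (-G2k x) * φ x)) := by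
  obtain ⟨c, hc, hlow⟩ := hlow
  obtain ⟨δ, hδ, hkeyδ⟩ := hkey (c / 2) (by linarith)
  obtain ⟨m, hm, hfarm⟩ := hfar δ hδ
  set t : ℕ → ℝ := fun N => (N:ℝ) ^ (-(1:ℝ) / (2 * (k:ℝ))) with ht
  set h : ℕ → (Fin n → ℝ) → ℝ := fun N x => Real.exp (-(N : ℝ) * G (t N • x)) * φ x with hh
  -- continuity / measurability of h N
  have hhcont : ∀ N, Continuous (h N) := fun N =>
    (Real.continuous_exp.comp (continuous_const.mul
      (hGc.comp (continuous_const_smul (t N))))).mul φ.continuous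
  -- the sets
  set S : ℕ → Set (Fin n → ℝ) := fun N => {x | ‖x‖ * t N ≤ δ} with hS
  have hSmeas : ∀ N, MeasurableSet (S N) :=
    fun N => (isClosed_le (continuous_norm.mul continuous_const) continuous_const).measurableSet
  -- key estimates for N ≥ 1
  have hin : ∀ N : ℕ, 1 ≤ N → ∀ x ∈ S N,
      Real.exp (-(N : ℝ) * G (t N • x)) ≤ Real.exp (-(c/2) * ‖x‖ ^ (2 * k)) := by
    intro N hN x hx
    obtain ⟨ht0, htN1⟩ := htN hN
    have h1 := hkeyδ (N:ℝ) (t N) x ht0 htN1 hx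
    have h2 := hlow x
    rw [Real.exp_le_exp]
    have := abs_le.mp h1
    nlinarith [this.1, this.2]
  have hout : ∀ N : ℕ, 1 ≤ N → ∀ x : Fin n → ℝ, x ∉ S N →
      Real.exp (-(N : ℝ) * G (t N • x)) ≤
        Real.exp (-((N:ℝ) - 1) * m) * Real.exp (-G (t N • x)) := by
    intro N hN x hx
    obtain ⟨ht0, _⟩ := htN hN
    have hxt : δ ≤ ‖t N • x‖ := by
      rw [norm_smul, Real.norm_eq_abs, abs_of_pos ht0, mul_comm]
      exact le_of_not_ge hx
    have hGm : m ≤ G (t N • x) := hfarm _ hxt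
    rw [← Real.exp_add, Real.exp_le_exp]
    have hN1 : (1:ℝ) ≤ (N:ℝ) := by exact_mod_cast hN
    nlinarith
  -- bounds
  set bound1 : (Fin n → ℝ) → ℝ := fun x => ‖φ‖ * Real.exp (-(c/2) * ‖x‖ ^ (2 * k)) with hb1
  have hbound1int : Integrable bound1 := (hgauss (c/2) (by linarith)).const_mul _
  set bound2 : ℕ → (Fin n → ℝ) → ℝ :=
    fun N x => (‖φ‖ * Real.exp (-((N:ℝ) - 1) * m)) * Real.exp (-G (t N • x)) with hb2
  have hbound2int : ∀ N : ℕ, 1 ≤ N → Integrable (bound2 N) := by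
    intro N hN
    exact ((hint.comp_smul (htN hN).1.ne').const_mul _)
  have hφ : ∀ x, |φ x| ≤ ‖φ‖ := fun x => by
    rw [← Real.norm_eq_abs]
    exact φ.norm_coe_le_norm x
  have hhbound : ∀ N : ℕ, 1 ≤ N → ∀ x, ‖h N x‖ ≤ bound1 x + bound2 N x := by
    intro N hN x
    have hbb : ‖h N x‖ ≤ Real.exp (-(N : ℝ) * G (t N • x)) * ‖φ‖ := by
      rw [hh]
      simp only [norm_mul, Real.norm_eq_abs, abs_of_pos (Real.exp_pos _)]
      exact mul_le_mul_of_nonneg_left (hφ x) (Real.exp_pos _).le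
    by_cases hx : x ∈ S N
    · have := hin N hN x hx
      have h2 : (0:ℝ) ≤ bound2 N x := by positivity
      have : Real.exp (-(N : ℝ) * G (t N • x)) * ‖φ‖ ≤ bound1 x := by
        rw [hb1]
        rw [mul_comm]
        exact mul_le_mul_of_nonneg_left this (norm_nonneg φ)
      linarith
    · have := hout N hN x hx
      have h2 : (0:ℝ) ≤ bound1 x := by positivity
      have : Real.exp (-(N : ℝ) * G (t N • x)) * ‖φ‖ ≤ bound2 N x := by
        rw [hb2]
        calc Real.exp (-(N : ℝ) * G (t N • x)) * ‖φ‖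
            ≤ (Real.exp (-((N:ℝ) - 1) * m) * Real.exp (-G (t N • x))) * ‖φ‖ :=
              mul_le_mul_of_nonneg_right this (norm_nonneg φ)
          _ = ‖φ‖ * Real.exp (-((N:ℝ) - 1) * m) * Real.exp (-G (t N • x)) := by ring
      linarith
  have hhint : ∀ N : ℕ, 1 ≤ N → Integrable (h N) := by
    intro N hN
    apply (hbound1int.add (hbound2int N hN)).mono (hhcont N).aestronglyMeasurable
    refine Eventually.of_forall fun x => ?_
    have h1 := hhbound N hN x
    have h2 : (0:ℝ) ≤ bound1 x + bound2 N x := by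
      have : (0:ℝ) ≤ bound1 x := by positivity
      have : (0:ℝ) ≤ bound2 N x := by positivity
      positivity
    calc ‖h N x‖ ≤ bound1 x + bound2 N x := h1
      _ ≤ ‖bound1 x + bound2 N x‖ := le_abs_self _
  -- pointwise limit of N * G (t N • x)
  have hpt : ∀ x : Fin n → ℝ,
      Tendsto (fun N : ℕ => (N:ℝ) * G (t N • x)) atTop (nhds (G2k x)) := by
    intro x
    rw [Metric.tendsto_nhds]
    intro ε hε
    set ε₁ : ℝ := ε / (2 * (‖x‖ ^ (2 * k) + 1)) with hε₁
    have hε₁0 : 0 < ε₁ := by positivity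
    obtain ⟨δ', hδ', hkey'⟩ := hkey ε₁ hε₁0
    have hev : ∀ᶠ N : ℕ in atTop, t N < δ' / (‖x‖ + 1) :=
      htNlim.eventually_lt_const (by positivity)
    filter_upwards [hev, eventually_ge_atTop 1] with N hN1 hN2
    obtain ⟨ht0, htN1⟩ := htN hN2
    have hxt : ‖x‖ * t N ≤ δ' := by
      have h1 : ‖x‖ * t N ≤ (‖x‖ + 1) * t N := by nlinarith [ht0.le, norm_nonneg x]
      have h2 : (‖x‖ + 1) * t N < δ' := by
        rw [lt_div_iff₀ (by positivity)] at hN1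
        nlinarith [norm_nonneg x]
      linarith
    have hkk := hkey' (N:ℝ) (t N) x ht0 htN1 hxt
    rw [Real.dist_eq]
    have hlt : ε₁ * ‖x‖ ^ (2 * k) < ε := by
      rw [hε₁, div_mul_eq_mul_div, div_lt_iff₀ (by positivity)]
      nlinarith [pow_nonneg (norm_nonneg x) (2 * k)]
    linarith
  -- pointwise limit of h N x
  have hptH : ∀ x : Fin n → ℝ,
      Tendsto (fun N : ℕ => h N x) atTop (nhds (Real.exp (-G2k x) * φ x)) := by
    intro x
    have h1 : Tendsto (fun N : ℕ => -(N:ℝ) * G (t N • x)) atTop (nhds (-G2k x)) := by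
      have h2 := (hpt x).neg
      refine h2.congr fun N => by ring
    exact (Real.continuous_exp.continuousAt.tendsto.comp h1).mul_const (φ x)
  -- indicator decomposition
  set f : ℕ → (Fin n → ℝ) → ℝ := fun N => (S N).indicator (h N) with hf
  set g : ℕ → (Fin n → ℝ) → ℝ := fun N => (S N)ᶜ.indicator (h N) with hg
  have hfint : ∀ N : ℕ, 1 ≤ N → Integrable (f N) :=
    fun N hN => (hhint N hN).indicator (hSmeas N)
  have hgint : ∀ N : ℕ, 1 ≤ N → Integrable (g N) :=
    fun N hN => (hhint N hN).indicator (hSmeas N).compl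
  -- eventual membership in S N
  have hevS : ∀ x : Fin n → ℝ, ∀ᶠ N : ℕ in atTop, x ∈ S N := by
    intro x
    have hev : ∀ᶠ N : ℕ in atTop, t N < δ / (‖x‖ + 1) :=
      htNlim.eventually_lt_const (by positivity)
    filter_upwards [hev, eventually_ge_atTop 1] with N hN1 hN2
    obtain ⟨ht0, _⟩ := htN hN2
    have h1 : ‖x‖ * t N ≤ (‖x‖ + 1) * t N := by nlinarith [ht0.le, norm_nonneg x]
    have h2 : (‖x‖ + 1) * t N < δ := by
      rw [lt_div_iff₀ (by positivity)] at hN1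
      nlinarith [norm_nonneg x]
    exact le_of_lt (lt_of_le_of_lt h1 h2)
  -- DCT for f
  have hft : Tendsto (fun N : ℕ => ∫ x, f N x) atTop
      (nhds (∫ x, Real.exp (-G2k x) * φ x)) := by
    apply tendsto_integral_filter_of_dominated_convergence bound1
    · filter_upwards [eventually_ge_atTop 1] with N hN
      exact ((hhcont N).aestronglyMeasurable).indicator (hSmeas N)
    · filter_upwards [eventually_ge_atTop 1] with N hN
      refine Eventually.of_forall fun x => ?_
      by_cases hx : x ∈ S N
      · rw [hf]; simp only [Set.indicator_of_mem hx]
        have h3 := hin N hN x hx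
        calc ‖h N x‖ ≤ Real.exp (-(N : ℝ) * G (t N • x)) * ‖φ‖ := by
              rw [hh]
              simp only [norm_mul, Real.norm_eq_abs, abs_of_pos (Real.exp_pos _)]
              exact mul_le_mul_of_nonneg_left (hφ x) (Real.exp_pos _).le
          _ ≤ bound1 x := by
              rw [hb1, mul_comm]
              exact mul_le_mul_of_nonneg_left h3 (norm_nonneg φ)
      · rw [hf]; simp only [Set.indicator_of_notMem hx]
        rw [norm_zero, hb1]
        positivity
    · exact hbound1int
    · refine Eventually.of_forall fun x => ?_
      refine Tendsto.congr' ?_ (hptH x)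
      filter_upwards [hevS x] with N hN
      rw [hf]
      simp [Set.indicator_of_mem hN]
  -- g tends to zero
  have hgt : Tendsto (fun N : ℕ => ∫ x, g N x) atTop (nhds 0) := by
    set C : ℝ := ∫ x : Fin n → ℝ, Real.exp (-G x) with hC
    set D : ℕ → ℝ := fun N => (‖φ‖ * Real.exp (-((N:ℝ) - 1) * m)) *
      ((N:ℝ) ^ ((n:ℝ) / (2 * (k:ℝ))) * C) with hD
    apply squeeze_zero_norm' (f := fun N : ℕ => ∫ x, g N x) (a := D)
    · filter_upwards [eventually_ge_atTop 1] with N hN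
      have hb2int := hbound2int N hN
      have hgb : ∀ x, ‖g N x‖ ≤ bound2 N x := by
        intro x
        by_cases hx : x ∈ S N
        · rw [hg]
          have hx' : x ∉ (S N)ᶜ := by simpa using hx
          simp only [Set.indicator_of_notMem hx']
          rw [norm_zero, hb2]; positivity
        · rw [hg]
          have hx' : x ∈ (S N)ᶜ := by simpa using hx
          simp only [Set.indicator_of_mem hx']
          have h3 := hout N hN x hx
          calc ‖h N x‖ ≤ Real.exp (-(N:ℝ) * G (t N • x)) * ‖φ‖ := by
                rw [hh]
                simp only [norm_mul, Real.norm_eq_abs, abs_of_pos (Real.exp_pos _)]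
                exact mul_le_mul_of_nonneg_left (hφ x) (Real.exp_pos _).le
            _ ≤ bound2 N x := by
                rw [hb2]
                calc Real.exp (-(N:ℝ) * G (t N • x)) * ‖φ‖
                    ≤ (Real.exp (-((N:ℝ) - 1) * m) * Real.exp (-G (t N • x))) * ‖φ‖ :=
                      mul_le_mul_of_nonneg_right h3 (norm_nonneg φ)
                  _ = ‖φ‖ * Real.exp (-((N:ℝ) - 1) * m) * Real.exp (-G (t N • x)) := by ring
      have h1 : ‖∫ x, g N x‖ ≤ ∫ x, bound2 N x :=
        norm_integral_le_of_norm_le hb2int (Eventually.of_forall hgb)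
      have h2 : (∫ x, bound2 N x) = D N := by
        rw [hb2]
        rw [integral_const_mul]
        have h3 := MeasureTheory.Measure.integral_comp_smul volume
          (fun y : Fin n → ℝ => Real.exp (-G y)) (t N)
        rw [hD]
        rw [h3, Module.finrank_fin_fun, htNscale hN]
        simp [smul_eq_mul, hC]
      rw [h2] at h1
      exact h1
    · have h0 : Tendsto (fun y : ℝ => y ^ ((n:ℝ)/(2*(k:ℝ))) * Real.exp (-m * y)) atTop
          (nhds 0) := tendsto_rpow_mul_exp_neg_mul_atTop_nhds_zero _ m hm
      have h1 : Tendsto (fun N : ℕ => (N:ℝ) ^ ((n:ℝ)/(2*(k:ℝ))) * Real.exp (-m * (N:ℝ)))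
          atTop (nhds 0) := h0.comp tendsto_natCast_atTop_atTop
      have h2 := h1.const_mul (‖φ‖ * Real.exp m * C)
      rw [mul_zero] at h2
      refine h2.congr fun N => ?_
      show _ = ‖φ‖ * Real.exp (-((N:ℝ) - 1) * m) * ((N:ℝ) ^ ((n:ℝ) / (2 * (k:ℝ))) * C)
      rw [show -((N:ℝ) - 1) * m = m + -(m * (N:ℝ)) by ring, Real.exp_add]
      ring
  -- assemble
  have hsum := hft.add hgt
  rw [add_zero] at hsum
  refine hsum.congr' ?_
  filter_upwards [eventually_ge_atTop 1] with N hN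
  have hdecomp : h N = f N + g N := (Set.indicator_self_add_compl (S N) (h N)).symm
  calc (∫ x, f N x) + (∫ x, g N x)
      = ∫ x, (f N x + g N x) := (integral_add (hfint N hN) (hgint N hN)).symm
    _ = ∫ x, h N x := by
        apply integral_congr_ae
        refine Eventually.of_forall fun x => ?_
        rw [hdecomp]
        rfl

end aux

theorem stmt17 (n k : ℕ) (hk : 1 ≤ k) (G G2k : (Fin n → ℝ) → ℝ)
    (hsmooth : ContDiff ℝ (⊤ : ℕ∞) G) (hG0 : G 0 = 0)
    (hmin : ∀ x : Fin n → ℝ, x ≠ 0 → 0 < G x)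
    (hhom : ∀ t : ℝ, 0 < t → ∀ x, G2k (t • x) = t ^ (2 * k) * G2k x)
    (hpos : ∀ x : Fin n → ℝ, x ≠ 0 → 0 < G2k x)
    (htaylor : (fun x : Fin n → ℝ => G x - G2k x) =o[nhds 0]
      fun x : Fin n → ℝ => ‖x‖ ^ (2 * k))
    (hint : Integrable fun x : Fin n → ℝ => Real.exp (-G x))
    (hcoer : Tendsto G (cocompact (Fin n → ℝ)) atTop)
    (ψ : BoundedContinuousFunction (Fin n → ℝ) ℝ) :
    Tendsto (fun N : ℕ =>
        (∫ x : Fin n → ℝ, Real.exp (-(N : ℝ) * G (((N : ℝ) ^ (-(1 : ℝ) / (2 * k))) • x)) * ψ x) /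
        (∫ x : Fin n → ℝ, Real.exp (-(N : ℝ) * G (((N : ℝ) ^ (-(1 : ℝ) / (2 * k))) • x))))
      atTop
      (nhds ((∫ x : Fin n → ℝ, Real.exp (-G2k x) * ψ x) /
        (∫ x : Fin n → ℝ, Real.exp (-G2k x)))) := by
  have hGc : Continuous G := hsmooth.continuous
  have hkey := aux_key hk hhom htaylor
  have hcont : Continuous G2k := aux_cont hk hsmooth hhom htaylor hkey
  have hlow := aux_lower hk hcont hhom hpos
  have hfar := aux_far hGc hmin hcoer
  have hgauss : ∀ β > (0:ℝ), Integrable (fun x : Fin n → ℝ => Real.exp (-β * ‖x‖ ^ (2 * k))) :=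
    fun β hβ => aux_gauss hk hβ
  have num := aux_main hk G G2k hGc hkey hlow hfar hgauss
    (fun hN => aux_tN hk hN) (aux_tN_lim hk) (fun hN => aux_tN_scale hk hN) hint ψ
  have den : Tendsto (fun N : ℕ =>
      ∫ x : Fin n → ℝ, Real.exp (-(N : ℝ) * G (((N : ℝ) ^ (-(1 : ℝ) / (2 * k))) • x)))
      atTop (nhds (∫ x : Fin n → ℝ, Real.exp (-G2k x))) := by
    have hden := aux_main hk G G2k hGc hkey hlow hfar hgauss
      (fun hN => aux_tN hk hN) (aux_tN_lim hk) (fun hN => aux_tN_scale hk hN) hint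
      (BoundedContinuousFunction.const _ (1:ℝ))
    simpa using hden
  obtain ⟨c, hc, hlowc⟩ := hlow
  have hG2kint : Integrable (fun x : Fin n → ℝ => Real.exp (-G2k x)) := by
    apply (hgauss c hc).mono (Real.continuous_exp.comp hcont.neg).aestronglyMeasurable
    refine Eventually.of_forall fun x => ?_
    simp only [Real.norm_eq_abs, Function.comp_apply, Real.abs_exp, Real.exp_le_exp]
    have := hlowc x
    linarith [show (-G2k) x = -G2k x from rfl]
  have hden_pos : 0 < ∫ x : Fin n → ℝ, Real.exp (-G2k x) := by
    rw [integral_pos_iff_support_of_nonneg (fun x => (Real.exp_pos _).le) hG2kint]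
    have hsupp : Function.support (fun x : Fin n → ℝ => Real.exp (-G2k x)) = Set.univ :=
      Set.eq_univ_of_forall fun x => (Real.exp_pos _).ne'
    rw [hsupp]
    exact isOpen_univ.measure_pos volume ⟨0, trivial⟩
  exact num.div den hden_pos.ne'
end
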